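/- arXiv:2404.12326 — 2 statements merged into one kernel-verified Lean document; each statement's English description precedes it below -/
import Mathlib

section
/- The shuffle compositions △ on labelled planar rooted trees satisfy nested associativity: (t △_s u) △_m v = t △_s (u △_m v) for any vertex s of t and vertex m of u. In the case where m is the root of u, both sides equal the sum over all (In(s,t), In(m,u), In(r,v))-shuffles K' of the tree obtained by merging s, m, and the root of v into a single vertex with incoming branches ordered according to K'. -/
/-- Labelled planar rooted trees over a label type `V`: a labelled root together
with an ordered (left-to-right) list of subtrees. -/
inductive PT (V : Type) : Type
  | node : V → List (PT V) → PT V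

namespace PT

variable {V : Type} [DecidableEq V]

/-- The label of the root. -/
def rootLabel : PT V → V
  | .node a _ => a

/-- The subtrees attached to the root, in their left-to-right order. -/
def rootChildren : PT V → List (PT V)
  | .node _ cs => cs

/-- The list of labels (vertices) of a planar rooted tree. -/
def labels : PT V → List V
  | .node a cs => a :: (cs.attach.map fun c => labels c.1).flatten
  decreasing_by all_goals (simp_wf; have := List.sizeOf_lt_of_mem c.2; omega)

/-- Relabel a planar rooted tree along a map of labels. -/
def mapL (f : V → V) : PT V → PT V
  | .node a cs => .node (f a) (cs.attach.map fun c => mapL f c.1)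
  decreasing_by all_goals (simp_wf; have := List.sizeOf_lt_of_mem c.2; omega)

/-- The magmatic partial composition `t ∘ₛ u`: replace the vertex `s` of `t` by the
tree `u`, attaching the branches of `In(s,t)` at the root of `u` to the right of
(i.e. after) the already present branches `In(root u, u)`. -/
def comp : PT V → V → PT V → PT V
  | .node a cs, s, u =>
    if a = s then .node u.rootLabel (u.rootChildren ++ cs)
    else .node a (cs.attach.map fun c => comp c.1 s u)
  decreasing_by all_goals (simp_wf; have := List.sizeOf_lt_of_mem c.2; omega)

/-- All shuffles (interleavings preserving the order of each argument) of two lists. -/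
def shuffles : List α → List α → List (List α)
  | [], ys => [ys]
  | x :: xs, [] => [x :: xs]
  | x :: xs, y :: ys =>
      (shuffles xs (y :: ys)).map (x :: ·) ++ (shuffles (x :: xs) ys).map (y :: ·)
  termination_by xs ys => xs.length + ys.length

/-- All shuffles of three lists. -/
def shuffles3 : List α → List α → List α → List (List α)
  | [], ys, zs => shuffles ys zs
  | x :: xs, [], zs => shuffles (x :: xs) zs
  | x :: xs, y :: ys, [] => shuffles (x :: xs) (y :: ys)
  | x :: xs, y :: ys, z :: zs =>
      (shuffles3 xs (y :: ys) (z :: zs)).map (x :: ·) ++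
        (shuffles3 (x :: xs) ys (z :: zs)).map (y :: ·) ++
          (shuffles3 (x :: xs) (y :: ys) zs).map (z :: ·)
  termination_by xs ys zs => xs.length + ys.length + zs.length

/-- The list of all trees `t ∘ₛᴴ u`, where `H` runs over the shuffles of the ordered
sets `In(root u, u)` and `In(s,t)`: the vertex `s` of `t` is replaced by `u` and the
branches of `In(s,t)` and `In(root u, u)` are attached at the root of `u` in the
left-to-right order prescribed by `H`. -/
def scomp : PT V → V → PT V → List (PT V)
  | .node a cs, s, u =>
    if a = s then (shuffles u.rootChildren cs).map (fun l => .node u.rootLabel l)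
    else (List.sections (cs.attach.map fun c => scomp c.1 s u)).map (fun l => .node a l)
  decreasing_by all_goals (simp_wf; have := List.sizeOf_lt_of_mem c.2; omega)

/-- The shuffle (magmatic) partial composition `t △ₛ u := Σ_H t ∘ₛᴴ u`, a formal
linear combination of planar rooted trees. -/
noncomputable def tri (t : PT V) (s : V) (u : PT V) : PT V →₀ ℚ :=
  ((scomp t s u).map fun r => Finsupp.single r (1 : ℚ)).sum

/-- Bilinear extension of `△ₛ` to formal sums of planar rooted trees. -/
noncomputable def triext (x : PT V →₀ ℚ) (s : V) (y : PT V →₀ ℚ) : PT V →₀ ℚ :=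
  x.sum fun t a => y.sum fun u b => (a * b) • tri t s u

/-- Replace the full subtree at the vertex labelled `s` by the tree `w`. -/
def setAt : PT V → V → PT V → PT V
  | .node a cs, s, w =>
    if a = s then w else .node a (cs.attach.map fun c => setAt c.1 s w)
  decreasing_by all_goals (simp_wf; have := List.sizeOf_lt_of_mem c.2; omega)

/-- The ordered list of branches arriving at the vertex labelled `s`. -/
def childrenAt : PT V → V → List (PT V)
  | .node a cs, s =>
    if a = s then cs else (cs.attach.map fun c => childrenAt c.1 s).flatten
  decreasing_by all_goals (simp_wf; have := List.sizeOf_lt_of_mem c.2; omega)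


set_option linter.unusedSectionVars false


set_option maxHeartbeats 1000000


open List in
theorem perm_swap4 {α : Type*} (a b c d : List α) :
    a ++ b ++ (c ++ d) ~ a ++ c ++ (b ++ d) := by
  rw [List.append_assoc, List.append_assoc]
  refine List.Perm.append_left a ?_
  rw [← List.append_assoc, ← List.append_assoc]
  exact List.perm_append_comm.append_right d

theorem shuffles_nil_right (xs : List α) : shuffles xs [] = [xs] := by
  cases xs <;> simp [shuffles]

open List in
theorem perm_shuffles1 {α : Type*} (A B C : List α) :
    ((shuffles A B).flatMap fun H => shuffles H C) ~ shuffles3 A B C := by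
  match A, B, C with
  | [], B, C => simp [shuffles, shuffles3]
  | x :: xs, [], C => simp [shuffles, shuffles3]
  | x :: xs, y :: ys, [] =>
    simp [shuffles_nil_right, shuffles3]
  | x :: xs, y :: ys, z :: zs =>
    have IH1 := perm_shuffles1 xs (y :: ys) (z :: zs)
    have IH2 := perm_shuffles1 (x :: xs) ys (z :: zs)
    have IH3 := perm_shuffles1 (x :: xs) (y :: ys) zs
    rw [show shuffles (x :: xs) (y :: ys) =
        (shuffles xs (y :: ys)).map (x :: ·) ++ (shuffles (x :: xs) ys).map (y :: ·)
      from by rw [shuffles]]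
    rw [show shuffles3 (x :: xs) (y :: ys) (z :: zs) =
        (shuffles3 xs (y :: ys) (z :: zs)).map (x :: ·) ++
          (shuffles3 (x :: xs) ys (z :: zs)).map (y :: ·) ++
            (shuffles3 (x :: xs) (y :: ys) zs).map (z :: ·) from by rw [shuffles3]]
    rw [List.flatMap_append, List.flatMap_map, List.flatMap_map]
    have e1 : ∀ H : List α, shuffles (x :: H) (z :: zs) =
        (shuffles H (z :: zs)).map (x :: ·) ++ (shuffles (x :: H) zs).map (z :: ·) := by
      intro H; rw [shuffles]
    have e2 : ∀ H : List α, shuffles (y :: H) (z :: zs) =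
        (shuffles H (z :: zs)).map (y :: ·) ++ (shuffles (y :: H) zs).map (z :: ·) := by
      intro H; rw [shuffles]
    calc ((shuffles xs (y :: ys)).flatMap fun H => shuffles (x :: H) (z :: zs)) ++
          ((shuffles (x :: xs) ys).flatMap fun H => shuffles (y :: H) (z :: zs))
        ~ (((shuffles xs (y :: ys)).flatMap fun H => (shuffles H (z :: zs)).map (x :: ·)) ++
            ((shuffles xs (y :: ys)).flatMap fun H => (shuffles (x :: H) zs).map (z :: ·))) ++
          (((shuffles (x :: xs) ys).flatMap fun H => (shuffles H (z :: zs)).map (y :: ·)) ++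
            ((shuffles (x :: xs) ys).flatMap fun H => (shuffles (y :: H) zs).map (z :: ·))) := by
          refine List.Perm.append ?_ ?_
          · exact ((List.flatMap_append_perm _ _ _).trans
              (List.Perm.flatMap_left _ fun H _ => by rw [e1 H])).symm
          · exact ((List.flatMap_append_perm _ _ _).trans
              (List.Perm.flatMap_left _ fun H _ => by rw [e2 H])).symm
      _ ~ (((shuffles xs (y :: ys)).flatMap fun H => (shuffles H (z :: zs)).map (x :: ·)) ++
            ((shuffles (x :: xs) ys).flatMap fun H => (shuffles H (z :: zs)).map (y :: ·))) ++
          (((shuffles xs (y :: ys)).flatMap fun H => (shuffles (x :: H) zs).map (z :: ·)) ++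
            ((shuffles (x :: xs) ys).flatMap fun H => (shuffles (y :: H) zs).map (z :: ·))) :=
          perm_swap4 _ _ _ _
      _ ~ (shuffles3 xs (y :: ys) (z :: zs)).map (x :: ·) ++
            (shuffles3 (x :: xs) ys (z :: zs)).map (y :: ·) ++
          (shuffles3 (x :: xs) (y :: ys) zs).map (z :: ·) := by
          refine List.Perm.append (List.Perm.append ?_ ?_) ?_
          · rw [← List.map_flatMap]; exact IH1.map _
          · rw [← List.map_flatMap]; exact IH2.map _
          · rw [← List.map_flatMap, ← List.map_flatMap, ← List.map_append]
            refine List.Perm.map _ ?_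
            have : (shuffles (x :: xs) (y :: ys)).flatMap (fun H => shuffles H zs) =
                ((shuffles xs (y :: ys)).flatMap fun H => shuffles (x :: H) zs) ++
                  ((shuffles (x :: xs) ys).flatMap fun H => shuffles (y :: H) zs) := by
              rw [show shuffles (x :: xs) (y :: ys) =
                  (shuffles xs (y :: ys)).map (x :: ·) ++ (shuffles (x :: xs) ys).map (y :: ·)
                from by rw [shuffles], List.flatMap_append, List.flatMap_map, List.flatMap_map]
            exact this ▸ IH3
termination_by A.length + B.length + C.length

open List in
theorem perm_shuffles2 {α : Type*} (A B C : List α) :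
    ((shuffles B C).flatMap fun K => shuffles A K) ~ shuffles3 A B C := by
  match A, B, C with
  | A, [], C => cases A <;> simp [shuffles, shuffles3]
  | A, y :: ys, [] => cases A <;> simp [shuffles, shuffles3, shuffles_nil_right]
  | [], y :: ys, z :: zs => simp [shuffles, shuffles3]
  | x :: xs, y :: ys, z :: zs =>
    have IH1 := perm_shuffles2 xs (y :: ys) (z :: zs)
    have IH2 := perm_shuffles2 (x :: xs) ys (z :: zs)
    have IH3 := perm_shuffles2 (x :: xs) (y :: ys) zs
    rw [show shuffles (y :: ys) (z :: zs) =
        (shuffles ys (z :: zs)).map (y :: ·) ++ (shuffles (y :: ys) zs).map (z :: ·)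
      from by rw [shuffles]]
    rw [show shuffles3 (x :: xs) (y :: ys) (z :: zs) =
        (shuffles3 xs (y :: ys) (z :: zs)).map (x :: ·) ++
          (shuffles3 (x :: xs) ys (z :: zs)).map (y :: ·) ++
            (shuffles3 (x :: xs) (y :: ys) zs).map (z :: ·) from by rw [shuffles3]]
    rw [List.flatMap_append, List.flatMap_map, List.flatMap_map]
    have e1 : ∀ K : List α, shuffles (x :: xs) (y :: K) =
        (shuffles xs (y :: K)).map (x :: ·) ++ (shuffles (x :: xs) K).map (y :: ·) := by
      intro K; rw [shuffles]
    have e2 : ∀ K : List α, shuffles (x :: xs) (z :: K) =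
        (shuffles xs (z :: K)).map (x :: ·) ++ (shuffles (x :: xs) K).map (z :: ·) := by
      intro K; rw [shuffles]
    calc ((shuffles ys (z :: zs)).flatMap fun K => shuffles (x :: xs) (y :: K)) ++
          ((shuffles (y :: ys) zs).flatMap fun K => shuffles (x :: xs) (z :: K))
        ~ (((shuffles ys (z :: zs)).flatMap fun K => (shuffles xs (y :: K)).map (x :: ·)) ++
            ((shuffles ys (z :: zs)).flatMap fun K => (shuffles (x :: xs) K).map (y :: ·))) ++
          (((shuffles (y :: ys) zs).flatMap fun K => (shuffles xs (z :: K)).map (x :: ·)) ++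
            ((shuffles (y :: ys) zs).flatMap fun K => (shuffles (x :: xs) K).map (z :: ·))) := by
          refine List.Perm.append ?_ ?_
          · exact ((List.flatMap_append_perm _ _ _).trans
              (List.Perm.flatMap_left _ fun K _ => by rw [e1 K])).symm
          · exact ((List.flatMap_append_perm _ _ _).trans
              (List.Perm.flatMap_left _ fun K _ => by rw [e2 K])).symm
      _ ~ (((shuffles ys (z :: zs)).flatMap fun K => (shuffles xs (y :: K)).map (x :: ·)) ++
            ((shuffles (y :: ys) zs).flatMap fun K => (shuffles xs (z :: K)).map (x :: ·))) ++
          (((shuffles ys (z :: zs)).flatMap fun K => (shuffles (x :: xs) K).map (y :: ·)) ++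
            ((shuffles (y :: ys) zs).flatMap fun K => (shuffles (x :: xs) K).map (z :: ·))) :=
          perm_swap4 _ _ _ _
      _ ~ (shuffles3 xs (y :: ys) (z :: zs)).map (x :: ·) ++
          ((shuffles3 (x :: xs) ys (z :: zs)).map (y :: ·) ++
            (shuffles3 (x :: xs) (y :: ys) zs).map (z :: ·)) := by
          refine List.Perm.append ?_ (List.Perm.append ?_ ?_)
          · rw [← List.map_flatMap, ← List.map_flatMap, ← List.map_append]
            refine List.Perm.map _ ?_
            have : (shuffles (y :: ys) (z :: zs)).flatMap (fun K => shuffles xs K) =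
                ((shuffles ys (z :: zs)).flatMap fun K => shuffles xs (y :: K)) ++
                  ((shuffles (y :: ys) zs).flatMap fun K => shuffles xs (z :: K)) := by
              rw [show shuffles (y :: ys) (z :: zs) =
                  (shuffles ys (z :: zs)).map (y :: ·) ++ (shuffles (y :: ys) zs).map (z :: ·)
                from by rw [shuffles], List.flatMap_append, List.flatMap_map, List.flatMap_map]
            exact this ▸ IH1
          · rw [← List.map_flatMap]; exact IH2.map _
          · rw [← List.map_flatMap]; exact IH3.map _
      _ ~ _ := by rw [← List.append_assoc]
termination_by A.length + B.length + C.length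

open List in
theorem perm_flatMap_swap {α β γ : Type*} (l₁ : List α) (l₂ : List β) (h : α → β → γ) :
    (l₁.flatMap fun a => l₂.map fun b => h a b) ~ l₂.flatMap fun b => l₁.map fun a => h a b := by
  induction l₁ with
  | nil => simp
  | cons a l₁ ih =>
    rw [List.flatMap_cons]
    refine ((ih.append_left _).trans ?_)
    exact (List.map_append_flatMap_perm l₂ (fun b => h a b) (fun b => l₁.map fun a => h a b))

theorem shuffles_map {α β : Type*} (f : α → β) (A B : List α) :
    shuffles (A.map f) (B.map f) = (shuffles A B).map (List.map f) := by
  match A, B with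
  | [], B => simp [shuffles]
  | x :: xs, [] => simp [shuffles]
  | x :: xs, y :: ys =>
    have IH1 := shuffles_map f xs (y :: ys)
    have IH2 := shuffles_map f (x :: xs) ys
    rw [show shuffles (x :: xs) (y :: ys) =
        (shuffles xs (y :: ys)).map (x :: ·) ++ (shuffles (x :: xs) ys).map (y :: ·)
      from by rw [shuffles]]
    rw [List.map_cons, List.map_cons, show shuffles (f x :: xs.map f) (f y :: ys.map f) =
        (shuffles (xs.map f) (f y :: ys.map f)).map (f x :: ·) ++
          (shuffles (f x :: xs.map f) (ys.map f)).map (f y :: ·) from by rw [shuffles]]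
    rw [List.map_append, List.map_map, List.map_map, ← List.map_cons (f := f) (a := y) (l := ys),
      ← List.map_cons (f := f) (a := x) (l := xs), IH1, IH2, List.map_map, List.map_map]
    rfl
termination_by A.length + B.length

theorem flatMap_single {α β : Type*} (f : α → β) (l : List α) :
    l.flatMap (fun x => [f x]) = l.map f := by
  induction l <;> simp_all

theorem sections_map_singleton {α : Type*} (A : List α) :
    List.sections (A.map fun a => [a]) = [A] := by
  induction A with
  | nil => rfl
  | cons a A ih => simp [ih]

theorem sections_singleton_ctx {α : Type*} (A B : List α) (L : List α) :
    List.sections (A.map (fun a => [a]) ++ L :: B.map (fun b => [b])) =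
      L.map (fun x => A ++ x :: B) := by
  induction A with
  | nil => simp [sections_map_singleton]
  | cons a A ih => simp [ih, flatMap_single, List.map_map, Function.comp]

open List in
theorem perm_shuffles_sections {α : Type*} (Ls : List (List α)) (cs : List α) :
    ((shuffles Ls (cs.map fun c => [c])).flatMap List.sections) ~
      Ls.sections.flatMap (fun D => shuffles D cs) := by
  match Ls, cs with
  | [], cs => simp [shuffles, sections_map_singleton]
  | L :: Ls, [] => simp [shuffles_nil_right, shuffles]
  | L :: Ls, c :: cs =>
    have IH1 := perm_shuffles_sections Ls (c :: cs)
    have IH2 := perm_shuffles_sections (L :: Ls) cs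
    rw [List.map_cons, show shuffles (L :: Ls) ([c] :: cs.map fun c => [c]) =
        (shuffles Ls ([c] :: cs.map fun c => [c])).map (L :: ·) ++
          (shuffles (L :: Ls) (cs.map fun c => [c])).map ([c] :: ·) from by rw [shuffles]]
    rw [List.flatMap_append, List.flatMap_map, List.flatMap_map]
    calc ((shuffles Ls ((c :: cs).map fun c => [c])).flatMap fun H => List.sections (L :: H)) ++
          ((shuffles (L :: Ls) (cs.map fun c => [c])).flatMap fun H => List.sections ([c] :: H))
        ~ (((shuffles Ls ((c :: cs).map fun c => [c])).flatMap List.sections).flatMap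
              fun s => L.map (· :: s)) ++
            (((shuffles (L :: Ls) (cs.map fun c => [c])).flatMap List.sections).map (c :: ·)) := by
          refine List.Perm.append ?_ ?_
          · rw [List.flatMap_assoc]
            refine List.Perm.flatMap_left _ fun H _ => ?_
            simp
          · rw [List.map_flatMap]
            refine List.Perm.flatMap_left _ fun H _ => ?_
            simp [flatMap_single]
      _ ~ ((Ls.sections.flatMap fun D => shuffles D (c :: cs)).flatMap fun s => L.map (· :: s)) ++
            (((L :: Ls).sections.flatMap fun D => shuffles D cs).map (c :: ·)) :=
          List.Perm.append (IH1.flatMap_right _) (IH2.map _)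
      _ ~ (L :: Ls).sections.flatMap fun D => shuffles D (c :: cs) := by
          refine Perm.symm ?_
          have hsec : (L :: Ls).sections = Ls.sections.flatMap fun D => L.map (· :: D) := by
            simp
          calc (L :: Ls).sections.flatMap (fun D' => shuffles D' (c :: cs))
              = Ls.sections.flatMap fun D => L.flatMap fun x => shuffles (x :: D) (c :: cs) := by
                rw [hsec, List.flatMap_assoc]
                exact List.flatMap_congr fun D _ => by rw [List.flatMap_map]
            _ = Ls.sections.flatMap fun D => L.flatMap fun x =>
                  (shuffles D (c :: cs)).map (x :: ·) ++ (shuffles (x :: D) cs).map (c :: ·) :=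
                List.flatMap_congr fun D _ => List.flatMap_congr fun x _ => by rw [shuffles]
            _ ~ Ls.sections.flatMap fun D =>
                  (L.flatMap fun x => (shuffles D (c :: cs)).map (x :: ·)) ++
                    (L.flatMap fun x => (shuffles (x :: D) cs).map (c :: ·)) :=
                Perm.flatMap_left _ fun D _ => (List.flatMap_append_perm _ _ _).symm
            _ ~ (Ls.sections.flatMap fun D =>
                    L.flatMap fun x => (shuffles D (c :: cs)).map (x :: ·)) ++
                  (Ls.sections.flatMap fun D =>
                    L.flatMap fun x => (shuffles (x :: D) cs).map (c :: ·)) :=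
                (List.flatMap_append_perm _ _ _).symm
            _ ~ ((Ls.sections.flatMap fun D => shuffles D (c :: cs)).flatMap
                    fun s => L.map (· :: s)) ++
                  (((L :: Ls).sections.flatMap fun D => shuffles D cs).map (c :: ·)) := by
                refine List.Perm.append ?_ ?_
                · rw [List.flatMap_assoc]
                  exact Perm.flatMap_left _ fun D _ => perm_flatMap_swap L (shuffles D (c :: cs))
                    (fun x s => x :: s)
                · rw [List.map_flatMap, hsec, List.flatMap_assoc]
                  refine Perm.of_eq (List.flatMap_congr fun D _ => ?_)
                  rw [List.flatMap_map]
termination_by Ls.length + cs.length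

@[simp] theorem rootLabel_node (a : V) (cs : List (PT V)) : (node a cs).rootLabel = a := rfl

@[simp] theorem rootChildren_node (a : V) (cs : List (PT V)) :
    (node a cs).rootChildren = cs := rfl

theorem ind {P : PT V → Prop} (h : ∀ a cs, (∀ c ∈ cs, P c) → P (node a cs)) :
    ∀ t, P t
  | node a cs => h a cs fun c hc => ind h c
  decreasing_by all_goals (simp_wf; have := List.sizeOf_lt_of_mem hc; omega)

theorem labels_node (a : V) (cs : List (PT V)) :
    (node a cs).labels = a :: (cs.map labels).flatten := by
  rw [labels]; simp

theorem mem_labels_node {a' a : V} {cs : List (PT V)} :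
    a' ∈ (node a cs).labels ↔ a' = a ∨ ∃ c ∈ cs, a' ∈ c.labels := by
  rw [labels_node]; simp

theorem scomp_node (a : V) (cs : List (PT V)) (s : V) (u : PT V) :
    scomp (node a cs) s u =
      if a = s then (shuffles u.rootChildren cs).map (fun l => node u.rootLabel l)
      else (List.sections (cs.map fun c => scomp c s u)).map (fun l => node a l) := by
  rw [scomp]; split <;> simp

theorem setAt_node (a : V) (cs : List (PT V)) (s : V) (w : PT V) :
    setAt (node a cs) s w =
      if a = s then w else node a (cs.map fun c => setAt c s w) := by
  rw [setAt]; split <;> simp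

theorem childrenAt_node (a : V) (cs : List (PT V)) (s : V) :
    childrenAt (node a cs) s =
      if a = s then cs else (cs.map fun c => childrenAt c s).flatten := by
  rw [childrenAt]; split <;> simp

theorem scomp_not_mem {s : V} (u : PT V) :
    ∀ t : PT V, s ∉ t.labels → scomp t s u = [t] := by
  refine ind ?_
  intro a cs IH h
  rw [mem_labels_node] at h
  push_neg at h
  rw [scomp_node, if_neg (fun e => h.1 e.symm)]
  rw [List.map_congr_left (fun c hc => IH c hc (h.2 c hc)), sections_map_singleton]
  rfl

theorem childrenAt_not_mem {s : V} :
    ∀ t : PT V, s ∉ t.labels → childrenAt t s = [] := by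
  refine ind ?_
  intro a cs IH h
  rw [mem_labels_node] at h
  push_neg at h
  rw [childrenAt_node, if_neg (fun e => h.1 e.symm)]
  rw [List.map_congr_left (fun c hc => IH c hc (h.2 c hc))]
  simp

theorem setAt_not_mem {s : V} (w : PT V) :
    ∀ t : PT V, s ∉ t.labels → setAt t s w = t := by
  refine ind ?_
  intro a cs IH h
  rw [mem_labels_node] at h
  push_neg at h
  rw [setAt_node, if_neg (fun e => h.1 e.symm)]
  rw [List.map_congr_left (fun c hc => IH c hc (h.2 c hc))]
  simp

theorem nodup_child {a : V} {cs : List (PT V)} (h : (node a cs).labels.Nodup)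
    {c : PT V} (hc : c ∈ cs) : c.labels.Nodup := by
  rw [labels_node] at h
  exact (h.of_cons).sublist (List.sublist_flatten_of_mem (List.mem_map_of_mem (f := labels) hc))

theorem exists_split {s : V} {cs : List (PT V)}
    (hnd : ((cs.map labels).flatten).Nodup) (hs : ∃ c ∈ cs, s ∈ c.labels) :
    ∃ A c₀ B, cs = A ++ c₀ :: B ∧ s ∈ c₀.labels ∧
      (∀ c ∈ A, s ∉ c.labels) ∧ (∀ c ∈ B, s ∉ c.labels) := by
  induction cs with
  | nil => simp at hs
  | cons c cs ih =>
    rw [List.map_cons, List.flatten_cons] at hnd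
    rw [List.nodup_append] at hnd
    by_cases hc : s ∈ c.labels
    · refine ⟨[], c, cs, rfl, hc, by simp, fun c' hc' hm => ?_⟩
      exact hnd.2.2 s hc s (List.mem_flatten.2 ⟨c'.labels, List.mem_map_of_mem (f := labels) hc', hm⟩) rfl
    · obtain ⟨c', hc', hm⟩ := hs
      have hc'cs : c' ∈ cs := by
        rcases List.mem_cons.1 hc' with rfl | h
        · exact absurd hm hc
        · exact h
      obtain ⟨A, c₀, B, hcs, h₀, hA, hB⟩ := ih hnd.2.1 ⟨c', hc'cs, hm⟩
      refine ⟨c :: A, c₀, B, by rw [hcs]; rfl, h₀, ?_, hB⟩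
      intro c'' hc''
      rcases List.mem_cons.1 hc'' with rfl | h
      · exact hc
      · exact hA c'' h

theorem scomp_node_split {a s : V} {cs A B : List (PT V)} {c₀ : PT V}
    (hcs : cs = A ++ c₀ :: B) (has : a ≠ s)
    (hA : ∀ c ∈ A, s ∉ c.labels) (hB : ∀ c ∈ B, s ∉ c.labels) (w : PT V) :
    scomp (node a cs) s w = (scomp c₀ s w).map (fun x => node a (A ++ x :: B)) := by
  subst hcs
  rw [scomp_node, if_neg has, List.map_append, List.map_cons]
  rw [List.map_congr_left (fun c hc => scomp_not_mem w c (hA c hc)),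
    List.map_congr_left (fun c hc => scomp_not_mem w c (hB c hc)),
    sections_singleton_ctx, List.map_map]
  rfl


open List in
theorem key2 (u v : PT V) (s m : V) :
    ∀ t : PT V, t.labels.Nodup → s ∈ t.labels → m ∉ t.labels →
      ((scomp t s u).flatMap fun x => scomp x m v) ~
        (scomp u m v).flatMap fun w => scomp t s w := by
  obtain ⟨b, ds⟩ := u
  obtain ⟨r, es⟩ := v
  refine ind ?_
  intro a cs IH hnd hs hm
  rw [mem_labels_node] at hm
  push_neg at hm
  by_cases has : a = s
  · subst has
    rw [scomp_node, if_pos rfl, rootChildren_node, rootLabel_node, List.flatMap_map]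
    by_cases hbm : b = m
    · subst hbm
      have e1 : ∀ H : List (PT V), scomp (node b H) b (node r es) =
          (shuffles es H).map (fun l => node r l) := fun H => by
        rw [scomp_node, if_pos rfl, rootChildren_node, rootLabel_node]
      have e2 : scomp (node b ds) b (node r es) = (shuffles es ds).map (fun l => node r l) := by
        rw [scomp_node, if_pos rfl, rootChildren_node, rootLabel_node]
      rw [List.flatMap_congr (fun H _ => e1 H), e2, List.flatMap_map]
      have e3 : ∀ K : List (PT V), scomp (node a cs) a (node r K) =
          (shuffles K cs).map (fun l => node r l) := fun K => by
        rw [scomp_node, if_pos rfl, rootChildren_node, rootLabel_node]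
      rw [List.flatMap_congr (fun K _ => e3 K)]
      rw [show ((shuffles ds cs).flatMap fun H => (shuffles es H).map fun l => node r l) =
          ((shuffles ds cs).flatMap fun H => shuffles es H).map (fun l => node r l) from
        List.map_flatMap.symm]
      rw [show ((shuffles es ds).flatMap fun K => (shuffles K cs).map fun l => node r l) =
          ((shuffles es ds).flatMap fun K => shuffles K cs).map (fun l => node r l) from
        List.map_flatMap.symm]
      exact ((perm_shuffles2 es ds cs).map _).trans ((perm_shuffles1 es ds cs).map _).symm
    · have e1 : ∀ H : List (PT V), scomp (node b H) m (node r es) =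
          (List.sections (H.map fun c => scomp c m (node r es))).map (fun l => node b l) :=
        fun H => by rw [scomp_node, if_neg hbm]
      have e2 : scomp (node b ds) m (node r es) =
          (List.sections (ds.map fun c => scomp c m (node r es))).map (fun l => node b l) := by
        rw [scomp_node, if_neg hbm]
      rw [List.flatMap_congr (fun H _ => e1 H), e2, List.flatMap_map]
      have e3 : ∀ D : List (PT V), scomp (node a cs) a (node b D) =
          (shuffles D cs).map (fun l => node b l) := fun D => by
        rw [scomp_node, if_pos rfl, rootChildren_node, rootLabel_node]
      rw [List.flatMap_congr (fun D _ => e3 D)]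
      rw [show ((shuffles ds cs).flatMap fun H =>
            (List.sections (H.map fun c => scomp c m (node r es))).map fun l => node b l) =
          ((shuffles ds cs).flatMap fun H =>
            List.sections (H.map fun c => scomp c m (node r es))).map (fun l => node b l) from
        List.map_flatMap.symm]
      rw [show ((List.sections (ds.map fun c => scomp c m (node r es))).flatMap fun D =>
            (shuffles D cs).map fun l => node b l) =
          ((List.sections (ds.map fun c => scomp c m (node r es))).flatMap fun D =>
            shuffles D cs).map (fun l => node b l) from List.map_flatMap.symm]
      refine List.Perm.map _ ?_
      have e4 : ((shuffles ds cs).flatMap fun H =>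
          List.sections (H.map fun c => scomp c m (node r es))) =
          ((shuffles (ds.map fun c => scomp c m (node r es)) (cs.map fun c => [c])).flatMap
            List.sections) := by
        rw [show (cs.map fun c : PT V => [c]) =
            (cs.map fun c => scomp c m (node r es)) from
          (List.map_congr_left fun c hc =>
            (scomp_not_mem _ c (hm.2 c hc)).symm), shuffles_map, List.flatMap_map]
      rw [e4]
      exact perm_shuffles_sections _ cs
  · have hex : ∃ c ∈ cs, s ∈ c.labels := by
      rcases mem_labels_node.1 hs with h | h
      · exact absurd h.symm has
      · exact h
    obtain ⟨A, c₀, B, hcs, h₀, hA, hB⟩ := exists_split ((labels_node a cs ▸ hnd).of_cons) hex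
    have hc₀ : c₀ ∈ cs := by rw [hcs]; exact List.mem_append_right _ List.mem_cons_self
    have hmc : ∀ c ∈ cs, m ∉ c.labels := hm.2
    have hanem : a ≠ m := fun e => hm.1 e.symm
    have compute1 : ∀ w : PT V, scomp (node a cs) s w =
        (scomp c₀ s w).map (fun x => node a (A ++ x :: B)) :=
      fun w => scomp_node_split hcs has hA hB w
    have compute2 : ∀ x : PT V, scomp (node a (A ++ x :: B)) m (node r es) =
        (scomp x m (node r es)).map (fun y => node a (A ++ y :: B)) := by
      intro x
      refine scomp_node_split rfl hanem ?_ ?_ _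
      · intro c hc; exact hmc c (hcs ▸ List.mem_append_left _ hc)
      · intro c hc; exact hmc c (hcs ▸ List.mem_append_right _ (List.mem_cons_of_mem _ hc))
    rw [compute1 (node b ds), List.flatMap_map,
      List.flatMap_congr (fun x _ => compute2 x),
      show ((scomp c₀ s (node b ds)).flatMap fun x =>
          (scomp x m (node r es)).map fun y => node a (A ++ y :: B)) =
        ((scomp c₀ s (node b ds)).flatMap fun x => scomp x m (node r es)).map
          (fun y => node a (A ++ y :: B)) from List.map_flatMap.symm,
      List.flatMap_congr (fun w _ => compute1 w),
      show ((scomp (node b ds) m (node r es)).flatMap fun w =>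
          (scomp c₀ s w).map fun y => node a (A ++ y :: B)) =
        ((scomp (node b ds) m (node r es)).flatMap fun w => scomp c₀ s w).map
          (fun y => node a (A ++ y :: B)) from List.map_flatMap.symm]
    exact (IH c₀ hc₀ (nodup_child hnd hc₀) h₀ (hmc c₀ hc₀)).map _


open List in
theorem key1 (u v : PT V) (s : V) :
    ∀ t : PT V, t.labels.Nodup → s ∈ t.labels → u.rootLabel ∉ t.labels →
      ((scomp t s u).flatMap fun x => scomp x u.rootLabel v) ~
        (shuffles3 v.rootChildren u.rootChildren (t.childrenAt s)).map
          (fun K => t.setAt s (node v.rootLabel K)) := by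
  obtain ⟨b, ds⟩ := u
  obtain ⟨r, es⟩ := v
  simp only [rootLabel_node, rootChildren_node]
  refine ind ?_
  intro a cs IH hnd hs hb
  rw [mem_labels_node] at hb
  push_neg at hb
  by_cases has : a = s
  · subst has
    rw [scomp_node, if_pos rfl, rootChildren_node, rootLabel_node, List.flatMap_map]
    have e1 : ∀ H : List (PT V), scomp (node b H) b (node r es) =
        (shuffles es H).map (fun l => node r l) := fun H => by
      rw [scomp_node, if_pos rfl, rootChildren_node, rootLabel_node]
    rw [List.flatMap_congr (fun H _ => e1 H),
      show ((shuffles ds cs).flatMap fun H => (shuffles es H).map fun l => node r l) =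
        ((shuffles ds cs).flatMap fun H => shuffles es H).map (fun l => node r l) from
      List.map_flatMap.symm,
      childrenAt_node, if_pos rfl]
    have hset : ∀ K : List (PT V), setAt (node a cs) a (node r K) = node r K := fun K => by
      rw [setAt_node, if_pos rfl]
    rw [List.map_congr_left (fun K (_ : K ∈ shuffles3 es ds cs) => hset K)]
    exact (perm_shuffles2 es ds cs).map _
  · have hex : ∃ c ∈ cs, s ∈ c.labels := by
      rcases mem_labels_node.1 hs with h | h
      · exact absurd h.symm has
      · exact h
    obtain ⟨A, c₀, B, hcs, h₀, hA, hB⟩ := exists_split ((labels_node a cs ▸ hnd).of_cons) hex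
    have hc₀ : c₀ ∈ cs := by rw [hcs]; exact List.mem_append_right _ List.mem_cons_self
    have hbc : ∀ c ∈ cs, b ∉ c.labels := hb.2
    have haneb : a ≠ b := fun e => hb.1 e.symm
    have compute1 : ∀ w : PT V, scomp (node a cs) s w =
        (scomp c₀ s w).map (fun x => node a (A ++ x :: B)) :=
      fun w => scomp_node_split hcs has hA hB w
    have compute2 : ∀ x : PT V, scomp (node a (A ++ x :: B)) b (node r es) =
        (scomp x b (node r es)).map (fun y => node a (A ++ y :: B)) := by
      intro x
      refine scomp_node_split rfl haneb ?_ ?_ _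
      · intro c hc; exact hbc c (hcs ▸ List.mem_append_left _ hc)
      · intro c hc; exact hbc c (hcs ▸ List.mem_append_right _ (List.mem_cons_of_mem _ hc))
    have hchildren : childrenAt (node a cs) s = childrenAt c₀ s := by
      rw [childrenAt_node, if_neg has, hcs, List.map_append, List.map_cons,
        List.map_congr_left (fun c hc => childrenAt_not_mem c (hA c hc)),
        List.map_congr_left (fun c hc => childrenAt_not_mem c (hB c hc))]
      simp
    have hsetAt : ∀ w : PT V, setAt (node a cs) s w = node a (A ++ setAt c₀ s w :: B) := by
      intro w
      rw [setAt_node, if_neg has, hcs, List.map_append, List.map_cons,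
        List.map_congr_left (fun c hc => setAt_not_mem w c (hA c hc)),
        List.map_congr_left (fun c hc => setAt_not_mem w c (hB c hc))]
      simp
    rw [compute1 (node b ds), List.flatMap_map,
      List.flatMap_congr (fun x _ => compute2 x),
      show ((scomp c₀ s (node b ds)).flatMap fun x =>
          (scomp x b (node r es)).map fun y => node a (A ++ y :: B)) =
        ((scomp c₀ s (node b ds)).flatMap fun x => scomp x b (node r es)).map
          (fun y => node a (A ++ y :: B)) from List.map_flatMap.symm,
      hchildren, List.map_congr_left (fun K (_ : K ∈ shuffles3 es ds (childrenAt c₀ s)) =>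
        hsetAt (node r K)),
      show (shuffles3 es ds (childrenAt c₀ s)).map
          (fun K => node a (A ++ setAt c₀ s (node r K) :: B)) =
        ((shuffles3 es ds (childrenAt c₀ s)).map fun K => setAt c₀ s (node r K)).map
          (fun y => node a (A ++ y :: B)) from by rw [List.map_map]; rfl]
    exact (IH c₀ hc₀ (nodup_child hnd hc₀) h₀ (hbc c₀ hc₀)).map _


noncomputable def lsum (L : List (PT V)) : PT V →₀ ℚ :=
  (L.map fun r => Finsupp.single r (1 : ℚ)).sum

theorem lsum_perm {L L' : List (PT V)} (h : List.Perm L L') : lsum L = lsum L' :=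
  (h.map _).sum_eq

theorem lsum_append (L L' : List (PT V)) : lsum (L ++ L') = lsum L + lsum L' := by
  rw [lsum, List.map_append, List.sum_append]; rfl

theorem rootLabel_mem (u : PT V) : u.rootLabel ∈ u.labels := by
  obtain ⟨a, cs⟩ := u
  rw [rootLabel_node, labels_node]
  exact List.mem_cons_self


theorem tri_eq_lsum (t : PT V) (s : V) (u : PT V) : tri t s u = lsum (scomp t s u) := rfl

theorem triext_lsum_single (L : List (PT V)) (m : V) (v : PT V) :
    triext (lsum L) m (Finsupp.single v 1) = lsum (L.flatMap fun x => scomp x m v) := by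
  classical
  induction L with
  | nil =>
    show triext 0 m _ = lsum []
    rw [triext, Finsupp.sum_zero_index]
    rfl
  | cons r L ih =>
    have hcons : lsum (r :: L) = Finsupp.single r 1 + lsum L := by
      rw [lsum, List.map_cons, List.sum_cons]; rfl
    rw [List.flatMap_cons, lsum_append, hcons, triext, Finsupp.sum_add_index, ← triext, ← triext,
      ih]
    · congr 1
      rw [triext, Finsupp.sum_single_index, Finsupp.sum_single_index, one_mul, one_smul,
        tri_eq_lsum]
      · simp
      · simp
    · intro t' _
      simp
    · intro t' _ a a'
      simp [add_mul, add_smul, Finsupp.sum_add]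

theorem triext_single_lsum (t : PT V) (s : V) (L : List (PT V)) :
    triext (Finsupp.single t 1) s (lsum L) = lsum (L.flatMap fun w => scomp t s w) := by
  classical
  rw [triext, Finsupp.sum_single_index]
  swap
  · simp
  induction L with
  | nil =>
    show Finsupp.sum 0 _ = lsum []
    rw [Finsupp.sum_zero_index]
    rfl
  | cons w L ih =>
    have hcons : lsum (w :: L) = Finsupp.single w 1 + lsum L := by
      rw [lsum, List.map_cons, List.sum_cons]; rfl
    rw [List.flatMap_cons, lsum_append, hcons, Finsupp.sum_add_index, ih]
    · congr 1
      rw [Finsupp.sum_single_index, one_mul, one_smul, tri_eq_lsum]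
      simp
    · intro t' _
      simp
    · intro t' _ a a'
      simp [mul_add, add_smul, Finsupp.sum_add]

end PT

open PT in
/-- Nested associativity of the shuffle compositions `△` on labelled planar rooted
trees: `(t △ₛ u) △ₘ v = t △ₛ (u △ₘ v)` for any vertex `s` of `t` and any vertex
`m` of `u`.  Moreover, when `m` is the root of `u`, both sides equal the sum, over
all `(In(r,v), In(m,u), In(s,t))`-shuffles `K'`, of the tree obtained from `t` by
merging `s`, `m` and the root of `v` into a single vertex (labelled by the root of
`v`) whose incoming branches are ordered according to `K'`. -/
theorem mag_shuffle_nested_assoc {V : Type} [DecidableEq V] (t u v : PT V)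
    (ht : t.labels.Nodup) (hu : u.labels.Nodup) (hv : v.labels.Nodup)
    (htu : ∀ a ∈ t.labels, a ∉ u.labels) (htv : ∀ a ∈ t.labels, a ∉ v.labels)
    (huv : ∀ a ∈ u.labels, a ∉ v.labels)
    (s : V) (hs : s ∈ t.labels) :
    (∀ m ∈ u.labels,
      triext (tri t s u) m (Finsupp.single v 1) =
        triext (Finsupp.single t 1) s (tri u m v)) ∧
    (triext (tri t s u) u.rootLabel (Finsupp.single v 1) =
      ((shuffles3 v.rootChildren u.rootChildren (t.childrenAt s)).map
        (fun K' => Finsupp.single (t.setAt s (PT.node v.rootLabel K')) (1 : ℚ))).sum) := by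
  constructor
  · intro m hmu
    have hmt : m ∉ t.labels := fun h => htu m h hmu
    rw [tri_eq_lsum, triext_lsum_single, tri_eq_lsum, triext_single_lsum]
    exact lsum_perm (key2 u v s m t ht hs hmt)
  · have hrt : u.rootLabel ∉ t.labels := fun h => htu _ h (rootLabel_mem u)
    rw [tri_eq_lsum, triext_lsum_single]
    have hmap : ((shuffles3 v.rootChildren u.rootChildren (t.childrenAt s)).map
        (fun K' => Finsupp.single (t.setAt s (PT.node v.rootLabel K')) (1 : ℚ))).sum =
        lsum ((shuffles3 v.rootChildren u.rootChildren (t.childrenAt s)).map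
          (fun K' => t.setAt s (PT.node v.rootLabel K'))) := by
      rw [lsum, List.map_map]; rfl
    rw [hmap]
    exact lsum_perm (key1 u v s t ht hs hrt)
end

section
/- Let q be a positive symmetric operad. The partial compositions □_s on the composite species NAP ∘ q, defined by (t ⊗ ⊗_{C∈π} γ_C) □_s (u ⊗ ⊗_{B∈ρ} β_B) = (t ∘_{C_s} u) ⊗ ⊗_{D} α_D, where α_D = γ_C for D = C ∈ π\{C_s}, α_D = β_B for D = B ∈ ρ\{B_root(u)}, and α_{C_s ⊔_s B_root(u)} = γ_{C_s} ∘_s β_{B_root(u)}, make NAP ∘ q a symmetric operad. -/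
/-- A labelled rooted tree with vertex set `supp` inside an ambient label type `V`,
given by its root and its parent function (normalized to the identity outside
`supp`, and fixing the root). -/
structure LTree (V : Type) where
  supp : Finset V
  root : V
  parent : V → V

namespace LTree

variable {V : Type} [DecidableEq V]

/-- `t` is an honest rooted tree on its vertex set `t.supp`:  the root is a vertex,
the parent map fixes the root, sends vertices to vertices, every vertex reaches the
root by iterating the parent map (connectedness/acyclicity), and the parent map is
normalized to the identity outside the vertex set. -/
def IsTree (t : LTree V) : Prop :=
  t.root ∈ t.supp ∧ t.parent t.root = t.root ∧
    (∀ v ∈ t.supp, t.parent v ∈ t.supp ∧ ∃ n, t.parent^[n] v = t.root) ∧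
    (∀ v, v ∉ t.supp → t.parent v = v)

/-- The NAP partial composition `u ∘ₛ v`: replace the vertex `s` of `u` by the tree
`v`, reconnecting each edge of `u` arriving at `s` to the root of `v`. -/
def ncomp (u : LTree V) (s : V) (v : LTree V) : LTree V where
  supp := u.supp.erase s ∪ v.supp
  root := if u.root = s then v.root else u.root
  parent x :=
    if x ∈ u.supp.erase s then (if u.parent x = s then v.root else u.parent x)
    else if x ∈ v.supp then
      (if x = v.root then (if u.parent s = s then v.root else u.parent s) else v.parent x)
    else x

/-- Relabelling a tree along a bijection of the ambient label type. -/
def relabel (e : V ≃ V) (t : LTree V) : LTree V where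
  supp := t.supp.image e
  root := e t.root
  parent x := e (t.parent (e.symm x))

/-- The single-vertex tree on the vertex `a`. -/
def eta (a : V) : LTree V := ⟨{a}, a, fun x => x⟩

/-- The edges of `u` arriving at `s`, identified with the children of `s`. -/
def children (u : LTree V) (s : V) : Finset V :=
  (u.supp.erase s).filter (fun w => u.parent w = s)

/-- The tree `u ∘ₛᶠ v` for `f : In(s,u) → Ver(v)`: replace the vertex `s` of `u` by
the tree `v`, reconnecting each edge `a ∈ In(s,u)` to the vertex `f a` of `v`. -/
def fcomp (u : LTree V) (s : V) (v : LTree V) (f : V → V) : LTree V where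
  supp := u.supp.erase s ∪ v.supp
  root := if u.root = s then v.root else u.root
  parent x :=
    if x ∈ u.supp.erase s then (if u.parent x = s then f x else u.parent x)
    else if x ∈ v.supp then
      (if x = v.root then (if u.parent s = s then v.root else u.parent s) else v.parent x)
    else x

/-- The Pre-Lie partial composition `u ∘ₛ v := Σ_{f : In(s,u) → Ver(v)} u ∘ₛᶠ v`,
a formal linear combination of rooted trees. -/
noncomputable def plcomp (u : LTree V) (s : V) (v : LTree V) : LTree V →₀ ℚ :=
  ∑ f : {w // w ∈ children u s} → {x // x ∈ v.supp},
    Finsupp.single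
      (fcomp u s v (fun w => if h : w ∈ children u s then (f ⟨w, h⟩ : V) else v.root)) 1

/-- Bilinear extension of the Pre-Lie partial composition to formal sums. -/
noncomputable def plext (x : LTree V →₀ ℚ) (s : V) (y : LTree V →₀ ℚ) : LTree V →₀ ℚ :=
  x.sum fun t a => y.sum fun u b => (a * b) • plcomp t s u

end LTree

/-- A positive symmetric operad `q`, presented in "supported elements" form over an
ambient label type `V`: a carrier type `Q` of operations, each with a nonempty
finite support (its finite input set) in `V`, together with partial compositions
`∘ₛ`, units, and relabelling along bijections of `V`, satisfying the symmetric
operad axioms (parallel and nested associativity, naturality, unitality). -/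
structure POperad (V : Type) (Q : Type) [DecidableEq V] where
  supp : Q → Finset V
  comp : Q → V → Q → Q
  unit : V → Q
  relabel : (V ≃ V) → Q → Q
  supp_nonempty : ∀ x, (supp x).Nonempty
  supp_comp : ∀ x s y, s ∈ supp x → supp (comp x s y) = (supp x).erase s ∪ supp y
  supp_unit : ∀ a, supp (unit a) = {a}
  supp_relabel : ∀ e x, supp (relabel e x) = (supp x).image e
  parallel : ∀ x y z s s', s ∈ supp x → s' ∈ supp x → s ≠ s' →
    Disjoint (supp x) (supp y) → Disjoint (supp x) (supp z) →
    Disjoint (supp y) (supp z) →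
    comp (comp x s y) s' z = comp (comp x s' z) s y
  nested : ∀ x y z s t, s ∈ supp x → t ∈ supp y →
    Disjoint (supp x) (supp y) → Disjoint (supp x) (supp z) →
    Disjoint (supp y) (supp z) →
    comp (comp x s y) t z = comp x s (comp y t z)
  natural : ∀ e x s y, s ∈ supp x →
    relabel e (comp x s y) = comp (relabel e x) (e s) (relabel e y)
  natural_unit : ∀ e a, relabel e (unit a) = unit (e a)
  unit_left : ∀ a y, comp (unit a) a y = y
  unit_right : ∀ x s, s ∈ supp x → comp x s (unit s) = x

namespace LTree

variable {V Q : Type} [DecidableEq V] [DecidableEq Q]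

/-- Rename the single vertex `o` of a tree to `n`. -/
def rename (t : LTree Q) (o n : Q) : LTree Q where
  supp := insert n (t.supp.erase o)
  root := if t.root = o then n else t.root
  parent x :=
    if x = n then (if t.parent o = o then n else t.parent o)
    else if x ∈ t.supp.erase o then (if t.parent x = o then n else t.parent x)
    else x

/-- Relabel the vertices of a tree along a map `f` (injective on the vertex set). -/
noncomputable def mapV (f : Q → Q) (t : LTree Q) : LTree Q where
  supp := t.supp.image f
  root := f t.root
  parent x := if h : ∃ v, v ∈ t.supp ∧ f v = x then f (t.parent h.choose) else x

end LTree

namespace NAPofQ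

variable {V Q : Type} [DecidableEq V] [DecidableEq Q]

/-- An element of the composite species `NAP ∘ q` on the set `I`: a rooted tree
whose vertices are `q`-operations (the blocks `C` of a partition `π ⊢ I` decorated
by `γ_C ∈ q[C]`).  Validity: the underlying tree is an honest rooted tree and the
supports of the decorations of distinct vertices are disjoint (so that they form a
partition of the total support). -/
def Valid (q : POperad V Q) (X : LTree Q) : Prop :=
  X.IsTree ∧ ∀ c ∈ X.supp, ∀ c' ∈ X.supp, c ≠ c' → Disjoint (q.supp c) (q.supp c')

/-- The total support (underlying set `I`) of an element of `NAP ∘ q`. -/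
def tsupp (q : POperad V Q) (X : LTree Q) : Finset V :=
  X.supp.biUnion q.supp

/-- The block `C_s` of `X` containing `s`: the unique vertex of `X` whose
decoration has `s` in its support. -/
noncomputable def blockOf (q : POperad V Q) (X : LTree Q) (s : V) : Q :=
  if h : ∃ c, c ∈ X.supp ∧ s ∈ q.supp c then h.choose else X.root

/-- The partial composition `□ₛ` on `NAP ∘ q`:
`(t ⊗ ⊗_C γ_C) □ₛ (u ⊗ ⊗_B β_B) = (t ∘_{C_s} u) ⊗ ⊗_D α_D`, where the tree of the
first factor is NAP-composed at the block `C_s` containing `s` with the tree of the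
second factor, the decoration of the merged block `C_s ⊔ₛ B_root(u)` is
`γ_{C_s} ∘ₛ β_{B_root(u)}`, and all other decorations are kept. -/
noncomputable def box (q : POperad V Q) (X : LTree Q) (s : V) (Y : LTree Q) : LTree Q :=
  LTree.ncomp X (blockOf q X s)
    (LTree.rename Y Y.root (q.comp (blockOf q X s) s Y.root))

/-- The unit of `NAP ∘ q` on a singleton `{a}`: the one-vertex tree decorated by
the unit of `q`. -/
def unitT (q : POperad V Q) (a : V) : LTree Q := ⟨{q.unit a}, q.unit a, fun x => x⟩

end NAPofQ

/-!
An element of `NAP ∘ q` is a rooted tree whose vertices are `q`-operations with pairwise disjoint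
supports, and `X □ₛ Y` substitutes `Y` for the block `C_s` of `X`, merging `C_s` and the root of
`Y` into the single vertex `C_s ∘ₛ root(Y)`. Forgetting `q`, this is a substitution of trees along
a merged vertex (`LTree.graft`), and the identities of the NAP operad hold for it as soon as the
labels of the merged vertices are fresh: grafts at distinct vertices commute, a graft at a
non-root vertex of the inserted tree associates, and grafting at a merged vertex is grafting a
tree whose root is already merged. Each axiom of `NAP ∘ q` is one of these identities, with the
labels of the merged vertices matched by the corresponding axiom of `q` (parallel associativity
when `s, s'` lie in the same block, nested associativity when `t` lies in the root block of
`Y`). Freshness comes from supports: a composite into the root of a tree contains the support of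
that root, which is disjoint from every other block in sight.
-/

namespace LTree

section

variable {Q : Type}

theorem IsTree.root_mem {t : LTree Q} (ht : t.IsTree) : t.root ∈ t.supp := ht.1

theorem IsTree.parent_root {t : LTree Q} (ht : t.IsTree) : t.parent t.root = t.root := ht.2.1

theorem IsTree.parent_mem {t : LTree Q} (ht : t.IsTree) {v : Q} (hv : v ∈ t.supp) :
    t.parent v ∈ t.supp :=
  (ht.2.2.1 v hv).1

theorem IsTree.parent_of_notMem {t : LTree Q} (ht : t.IsTree) {v : Q} (hv : v ∉ t.supp) :
    t.parent v = v :=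
  ht.2.2.2 v hv

theorem eq_iff {t u : LTree Q} :
    t = u ↔
      (∀ x, x ∈ t.supp ↔ x ∈ u.supp) ∧ t.root = u.root ∧ ∀ x, t.parent x = u.parent x := by
  cases t; cases u; simp [Finset.ext_iff, funext_iff]

end

variable {Q : Type} [DecidableEq Q]

@[simp] theorem mapV_supp (f : Q → Q) (t : LTree Q) : (mapV f t).supp = t.supp.image f := rfl

@[simp] theorem mapV_root (f : Q → Q) (t : LTree Q) : (mapV f t).root = f t.root := rfl

theorem mapV_parent_apply {f : Q → Q} {t : LTree Q} (hf : Set.InjOn f t.supp) {v : Q}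
    (hv : v ∈ t.supp) : (mapV f t).parent (f v) = f (t.parent v) := by
  have hex : ∃ w, w ∈ t.supp ∧ f w = f v := ⟨v, hv, rfl⟩
  simp only [mapV, dif_pos hex, hf hex.choose_spec.1 hv hex.choose_spec.2]

theorem mapV_parent_of_notMem {f : Q → Q} {t : LTree Q} {x : Q} (hx : x ∉ t.supp.image f) :
    (mapV f t).parent x = x := by
  simp_all [mapV]

theorem mapV_eta (f : Q → Q) (a : Q) : mapV f (eta a) = eta (f a) := by
  refine eq_iff.2 ⟨by simp [eta], rfl, fun x => ?_⟩
  simp only [mapV]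
  split_ifs with h
  exacts [h.choose_spec.2, rfl]

/-- Substitution of `u` for the vertex `c` of `t` in which `c` and the root of `u` merge into the
vertex `m`: this is `t.ncomp c (u.rename u.root m)` (see `ncomp_rename_root`), and in `NAP ∘ q`
the label `m` is the `q`-composite of the two merged decorations. -/
def graft (t : LTree Q) (c : Q) (u : LTree Q) (m : Q) : LTree Q where
  supp := t.supp.erase c ∪ insert m (u.supp.erase u.root)
  root := if t.root = c then m else t.root
  parent x :=
    if x ∈ t.supp.erase c then (if t.parent x = c then m else t.parent x)
    else if x = m then (if t.parent c = c then m else t.parent c)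
    else if x ∈ u.supp.erase u.root then (if u.parent x = u.root then m else u.parent x)
    else x

theorem ncomp_rename_root (t : LTree Q) (c : Q) (u : LTree Q) (m : Q) :
    t.ncomp c (u.rename u.root m) = t.graft c u m := by
  simp only [eq_iff, ncomp, rename, graft, Finset.mem_union, Finset.mem_erase, Finset.mem_insert]
  grind

theorem graft_comm {t u w : LTree Q} {c c' m m' : Q} (hu : u.IsTree) (hw : w.IsTree)
    (htu : Disjoint t.supp u.supp) (htw : Disjoint t.supp w.supp) (huw : Disjoint u.supp w.supp)
    (hc : c ∈ t.supp) (hc' : c' ∈ t.supp) (hcc' : c ≠ c') (hmt : m ∉ t.supp)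
    (hmw : m ∉ w.supp) (hm't : m' ∉ t.supp) (hm'u : m' ∉ u.supp) (hmm' : m ≠ m') :
    (t.graft c u m).graft c' w m' = (t.graft c' w m').graft c u m := by
  simp only [eq_iff, graft, Finset.mem_union, Finset.mem_erase, Finset.mem_insert]
  refine ⟨fun x => ?_, ?_, fun x => ?_⟩ <;>
    grind [IsTree.parent_mem, IsTree.root_mem, IsTree.parent_root, IsTree.parent_of_notMem,
      Finset.disjoint_left]

theorem graft_assoc {t u w : LTree Q} {c b m n : Q} (ht : t.IsTree) (hu : u.IsTree)
    (hw : w.IsTree) (htu : Disjoint t.supp u.supp) (htw : Disjoint t.supp w.supp)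
    (huw : Disjoint u.supp w.supp) (hc : c ∈ t.supp) (hb : b ∈ u.supp) (hbr : b ≠ u.root)
    (hmu : m ∉ u.supp.erase u.root) (hmw : m ∉ w.supp) (hnu : n ∉ u.supp) :
    (t.graft c u m).graft b w n = t.graft c (u.graft b w n) m := by
  simp only [eq_iff, graft, Finset.mem_union, Finset.mem_erase, Finset.mem_insert]
  refine ⟨fun x => ?_, ?_, fun x => ?_⟩ <;>
    grind [IsTree.parent_mem, IsTree.root_mem, IsTree.parent_root, IsTree.parent_of_notMem,
      Finset.disjoint_left]

theorem graft_graft_merged {t u w : LTree Q} {c m n k : Q} (ht : t.IsTree) (hu : u.IsTree)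
    (hw : w.IsTree) (htu : Disjoint t.supp u.supp) (htw : Disjoint t.supp w.supp)
    (hc : c ∈ t.supp) (hmt : m ∉ t.supp) (hmu : m ∉ u.supp.erase u.root) (hmw : m ∉ w.supp)
    (hnu : n ∉ u.supp.erase u.root) (hku : k ∉ u.supp.erase u.root)
    (hkw : k ∉ w.supp.erase w.root) :
    (t.graft c u m).graft m w n = t.graft c (u.graft u.root w k) n := by
  simp only [eq_iff, graft, Finset.mem_union, Finset.mem_erase, Finset.mem_insert]
  refine ⟨fun x => ?_, ?_, fun x => ?_⟩ <;>
    grind [IsTree.parent_mem, IsTree.root_mem, IsTree.parent_root, IsTree.parent_of_notMem,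
      Finset.disjoint_left]

theorem graft_root_comm {u w : LTree Q} {k : Q} (hu : u.IsTree) (hw : w.IsTree)
    (huw : Disjoint u.supp w.supp) (hku : k ∉ u.supp.erase u.root)
    (hkw : k ∉ w.supp.erase w.root) :
    u.graft u.root w k = w.graft w.root u k := by
  simp only [eq_iff, graft, Finset.mem_union, Finset.mem_erase, Finset.mem_insert]
  refine ⟨fun x => ?_, ?_, fun x => ?_⟩ <;>
    grind [IsTree.parent_mem, IsTree.root_mem, IsTree.parent_root, IsTree.parent_of_notMem,
      Finset.disjoint_left]

theorem eta_graft {u : LTree Q} (hu : u.IsTree) (c : Q) : (eta c).graft c u u.root = u := by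
  simp only [eq_iff, graft, eta, Finset.mem_union, Finset.mem_erase, Finset.mem_insert,
    Finset.mem_singleton]
  refine ⟨fun x => ?_, ?_, fun x => ?_⟩ <;>
    grind [IsTree.parent_mem, IsTree.root_mem, IsTree.parent_root, IsTree.parent_of_notMem]

theorem graft_eta {t : LTree Q} (ht : t.IsTree) {c : Q} (hc : c ∈ t.supp) (d : Q) :
    t.graft c (eta d) c = t := by
  simp only [eq_iff, graft, eta, Finset.mem_union, Finset.mem_erase, Finset.mem_insert,
    Finset.mem_singleton]
  refine ⟨fun x => ?_, ?_, fun x => ?_⟩ <;>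
    grind [IsTree.parent_mem, IsTree.parent_of_notMem]

theorem mapV_graft {f : Q → Q} {t u : LTree Q} {c m : Q} (ht : t.IsTree) (hu : u.IsTree)
    (htu : Disjoint t.supp u.supp) (hc : c ∈ t.supp) (hmt : m ∉ t.supp)
    (hmu : m ∉ u.supp.erase u.root) (hft : Set.InjOn f t.supp) (hfu : Set.InjOn f u.supp)
    (hfg : Set.InjOn f (t.graft c u m).supp) :
    mapV f (t.graft c u m) = (mapV f t).graft (f c) (mapV f u) (f m) := by
  have hg : ∀ a ∈ (t.graft c u m).supp, ∀ b ∈ (t.graft c u m).supp, f a = f b → a = b :=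
    fun a ha b hb => hfg ha hb
  simp only [graft, Finset.mem_union, Finset.mem_erase, Finset.mem_insert] at hg
  refine eq_iff.2 ⟨fun x => ?_, ?_, fun x => ?_⟩
  · simp only [mapV_supp, mapV_root, graft, Finset.mem_image, Finset.mem_union, Finset.mem_erase,
      Finset.mem_insert]
    grind [IsTree.root_mem, IsTree.parent_mem, Set.InjOn]
  · simp only [mapV_root, graft]
    grind [IsTree.root_mem, Set.InjOn]
  by_cases hx : x ∈ (t.graft c u m).supp.image f
  · obtain ⟨v, hv, rfl⟩ := Finset.mem_image.1 hx
    rw [mapV_parent_apply hfg hv]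
    simp only [graft, Finset.mem_union, Finset.mem_erase, Finset.mem_insert] at hv
    simp only [graft, mapV_supp, mapV_root, Finset.mem_image, Finset.mem_erase]
    rcases hv with ⟨hvc, hvt⟩ | rfl | ⟨hvr, hvu⟩
    · have hex : ∃ a ∈ t.supp, f a = f v := ⟨v, hvt, rfl⟩
      grind [mapV_parent_apply hft hvt, hft.eq_iff hvt hc, hft.eq_iff (ht.parent_mem hvt) hc]
    · have hvc : ∀ a ∈ t.supp, f a = f v → a = c := fun a ha h => by grind
      grind [mapV_parent_apply hft hc, hft.eq_iff (ht.parent_mem hc) hc]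
    · have hvc : ∀ a ∈ t.supp, f a = f v → a = c := fun a ha h => by
        grind [Finset.disjoint_left]
      have hex : ∃ a ∈ u.supp, f a = f v := ⟨v, hvu, rfl⟩
      grind [mapV_parent_apply hfu hvu, hfu.eq_iff hvu hu.root_mem,
        hfu.eq_iff (hu.parent_mem hvu) hu.root_mem]
  · rw [mapV_parent_of_notMem hx]
    simp only [graft, mapV_supp, mapV_root, Finset.mem_image, Finset.mem_union, Finset.mem_erase,
      Finset.mem_insert] at hx ⊢
    grind

end LTree

namespace POperad

variable {V Q : Type} [DecidableEq V] (q : POperad V Q)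

theorem supp_subset_comp_right {x y : Q} {s : V} (hs : s ∈ q.supp x) :
    q.supp y ⊆ q.supp (q.comp x s y) := by
  rw [q.supp_comp x s y hs]
  exact Finset.subset_union_right

theorem supp_comp_subset {x y : Q} {s : V} (hs : s ∈ q.supp x) :
    q.supp (q.comp x s y) ⊆ q.supp x ∪ q.supp y := by
  rw [q.supp_comp x s y hs]
  exact Finset.union_subset_union (Finset.erase_subset s _) le_rfl

theorem ne_of_subset_of_disjoint {a b y : Q} (hya : q.supp y ⊆ q.supp a)
    (hyb : Disjoint (q.supp y) (q.supp b)) : a ≠ b := by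
  rintro rfl
  obtain ⟨r, hr⟩ := q.supp_nonempty y
  exact Finset.disjoint_left.1 hyb hr (hya hr)

theorem ne_of_disjoint {a b : Q} (h : Disjoint (q.supp a) (q.supp b)) : a ≠ b :=
  q.ne_of_subset_of_disjoint subset_rfl h

/-- The axioms of `POperad` do not make `relabel e` injective; disjointness of supports does. -/
theorem injOn_relabel {S : Set Q} (hS : S.PairwiseDisjoint q.supp) (e : V ≃ V) :
    S.InjOn (q.relabel e) := by
  intro a ha b hb hab
  by_contra hne
  have hsupp : (q.supp a).image e = (q.supp b).image e := by
    rw [← q.supp_relabel, ← q.supp_relabel, hab]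
  rw [Finset.image_inj e.injective] at hsupp
  have hdisj : Disjoint (q.supp a) (q.supp b) := hS ha hb hne
  exact q.ne_of_disjoint (hsupp ▸ hdisj) rfl

end POperad

namespace NAPofQ

open LTree

section

variable {V Q : Type} [DecidableEq V] (q : POperad V Q)

theorem unitT_eq_eta (a : V) : unitT q a = eta (q.unit a) := rfl

theorem Valid.pairwiseDisjoint {X : LTree Q} (hX : Valid q X) :
    (X.supp : Set Q).PairwiseDisjoint q.supp :=
  fun a ha b hb => hX.2 a ha b hb

theorem supp_subset_tsupp {X : LTree Q} {c : Q} (hc : c ∈ X.supp) : q.supp c ⊆ tsupp q X :=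
  Finset.subset_biUnion_of_mem q.supp hc

theorem disjoint_supp_of_disjoint_tsupp {X Y : LTree Q} (hXY : Disjoint (tsupp q X) (tsupp q Y))
    {a b : Q} (ha : a ∈ X.supp) (hb : b ∈ Y.supp) : Disjoint (q.supp a) (q.supp b) :=
  hXY.mono (supp_subset_tsupp q ha) (supp_subset_tsupp q hb)

theorem disjoint_of_disjoint_tsupp {X Y : LTree Q} (hXY : Disjoint (tsupp q X) (tsupp q Y)) :
    Disjoint X.supp Y.supp :=
  Finset.disjoint_left.2 fun _ ha hb =>
    q.ne_of_disjoint (disjoint_supp_of_disjoint_tsupp q hXY ha hb) rfl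

theorem blockOf_spec {X : LTree Q} {s : V} (hs : s ∈ tsupp q X) :
    blockOf q X s ∈ X.supp ∧ s ∈ q.supp (blockOf q X s) := by
  have hex : ∃ c, c ∈ X.supp ∧ s ∈ q.supp c := by simpa [tsupp] using hs
  rw [blockOf, dif_pos hex]
  exact hex.choose_spec

theorem blockOf_eq {X : LTree Q} (hX : (X.supp : Set Q).PairwiseDisjoint q.supp) {s : V} {c : Q}
    (hc : c ∈ X.supp) (hs : s ∈ q.supp c) : blockOf q X s = c := by
  obtain ⟨hc', hs'⟩ := blockOf_spec q (Finset.mem_biUnion.2 ⟨c, hc, hs⟩)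
  exact hX.elim hc' hc (Finset.not_disjoint_iff.2 ⟨s, hs', hs⟩)

theorem comp_root_notMem {W T : LTree Q} (hW : W.IsTree)
    (hWT : Disjoint (tsupp q W) (tsupp q T)) {x : Q} {s : V} (hs : s ∈ q.supp x) :
    q.comp x s W.root ∉ T.supp := fun h =>
  q.ne_of_subset_of_disjoint (q.supp_subset_comp_right hs)
    (disjoint_supp_of_disjoint_tsupp q hWT hW.root_mem h) rfl

end

variable {V Q : Type} [DecidableEq V] [DecidableEq Q] (q : POperad V Q)

theorem box_eq_graft (X : LTree Q) (s : V) (Y : LTree Q) :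
    box q X s Y = X.graft (blockOf q X s) Y (q.comp (blockOf q X s) s Y.root) :=
  ncomp_rename_root _ _ _ _

theorem box_eq_graft_of_mem {X : LTree Q} (hX : (X.supp : Set Q).PairwiseDisjoint q.supp) {c : Q}
    (hc : c ∈ X.supp) {s : V} (hs : s ∈ q.supp c) (Y : LTree Q) :
    box q X s Y = X.graft c Y (q.comp c s Y.root) := by
  rw [box_eq_graft, blockOf_eq q hX hc hs]

theorem comp_root_notMem_erase_root {W : LTree Q} (hW : Valid q W) {x : Q} {s : V}
    (hs : s ∈ q.supp x) : q.comp x s W.root ∉ W.supp.erase W.root := fun h =>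
  q.ne_of_subset_of_disjoint (q.supp_subset_comp_right hs)
    (hW.2 _ hW.1.root_mem _ (Finset.mem_of_mem_erase h) (Finset.ne_of_mem_erase h).symm) rfl

theorem pairwiseDisjoint_graft {X Y : LTree Q} (hX : Valid q X) (hY : Valid q Y)
    (hXY : Disjoint (tsupp q X) (tsupp q Y)) {c : Q} {s : V} (hc : c ∈ X.supp)
    (hs : s ∈ q.supp c) :
    ((X.graft c Y (q.comp c s Y.root)).supp : Set Q).PairwiseDisjoint q.supp := by
  have hXY' : ((X.supp ∪ Y.supp : Finset Q) : Set Q).PairwiseDisjoint q.supp := by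
    rw [Finset.coe_union]
    exact hX.pairwiseDisjoint.union hY.pairwiseDisjoint
      fun a ha b hb _ => disjoint_supp_of_disjoint_tsupp q hXY ha hb
  simp only [graft, Finset.coe_union, Finset.coe_insert, Set.union_insert]
  refine (hXY'.subset ?_).insert fun b hb hne => ?_
  · rw [← Finset.coe_union, Finset.coe_subset]
    exact Finset.union_subset_union (Finset.erase_subset _ _) (Finset.erase_subset _ _)
  · refine Disjoint.mono_left (q.supp_comp_subset hs) (Finset.disjoint_union_left.2 ?_)
    simp only [Set.mem_union, Finset.mem_coe, Finset.mem_erase] at hb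
    rcases hb with ⟨hbc, hb⟩ | ⟨hbr, hb⟩
    · exact ⟨hX.2 c hc b hb (Ne.symm hbc),
        (disjoint_supp_of_disjoint_tsupp q hXY hb hY.1.root_mem).symm⟩
    · exact ⟨disjoint_supp_of_disjoint_tsupp q hXY hc hb,
        hY.2 _ hY.1.root_mem b hb (Ne.symm hbr)⟩

section Associativity

variable {X Y Z : LTree Q} (hX : Valid q X) (hY : Valid q Y) (hZ : Valid q Z)
  (hXY : Disjoint (tsupp q X) (tsupp q Y)) (hXZ : Disjoint (tsupp q X) (tsupp q Z))
  (hYZ : Disjoint (tsupp q Y) (tsupp q Z))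
include hX hY hZ hXY hXZ hYZ

theorem box_box_comm_of_ne {c c' : Q} (hc : c ∈ X.supp) (hc' : c' ∈ X.supp) (hcc' : c ≠ c')
    {s s' : V} (hs : s ∈ q.supp c) (hs' : s' ∈ q.supp c') :
    box q (box q X s Y) s' Z = box q (box q X s' Z) s Y := by
  have hMYZ : q.comp c s Y.root ≠ q.comp c' s' Z.root :=
    q.ne_of_subset_of_disjoint (q.supp_subset_comp_right hs) <|
      Disjoint.mono_right (q.supp_comp_subset hs') <| Finset.disjoint_union_right.2
        ⟨(disjoint_supp_of_disjoint_tsupp q hXY hc' hY.1.root_mem).symm,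
          disjoint_supp_of_disjoint_tsupp q hYZ hY.1.root_mem hZ.1.root_mem⟩
  rw [box_eq_graft_of_mem q hX.pairwiseDisjoint hc hs,
    box_eq_graft_of_mem q hX.pairwiseDisjoint hc' hs',
    box_eq_graft_of_mem q (pairwiseDisjoint_graft q hX hY hXY hc hs)
      (Finset.mem_union_left _ (Finset.mem_erase.2 ⟨hcc'.symm, hc'⟩)) hs',
    box_eq_graft_of_mem q (pairwiseDisjoint_graft q hX hZ hXZ hc' hs')
      (Finset.mem_union_left _ (Finset.mem_erase.2 ⟨hcc', hc⟩)) hs]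
  exact graft_comm hY.1 hZ.1 (disjoint_of_disjoint_tsupp q hXY)
    (disjoint_of_disjoint_tsupp q hXZ) (disjoint_of_disjoint_tsupp q hYZ) hc hc' hcc'
    (comp_root_notMem q hY.1 hXY.symm hs) (comp_root_notMem q hY.1 hYZ hs)
    (comp_root_notMem q hZ.1 hXZ.symm hs') (comp_root_notMem q hZ.1 hYZ.symm hs') hMYZ

theorem box_box_comm_of_mem {c : Q} (hc : c ∈ X.supp) {s s' : V} (hs : s ∈ q.supp c)
    (hs' : s' ∈ q.supp c) (hss' : s ≠ s') :
    box q (box q X s Y) s' Z = box q (box q X s' Z) s Y := by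
  set MY := q.comp c s Y.root
  set MZ := q.comp c s' Z.root
  set N := q.comp MY s' Z.root
  have hs'MY : s' ∈ q.supp MY := by
    rw [q.supp_comp c s Y.root hs]
    exact Finset.mem_union_left _ (Finset.mem_erase.2 ⟨hss'.symm, hs'⟩)
  have hsMZ : s ∈ q.supp MZ := by
    rw [q.supp_comp c s' Z.root hs']
    exact Finset.mem_union_left _ (Finset.mem_erase.2 ⟨hss', hs⟩)
  have hN : q.comp MZ s Y.root = N :=
    (q.parallel c Y.root Z.root s s' hs hs' hss'
      (disjoint_supp_of_disjoint_tsupp q hXY hc hY.1.root_mem)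
      (disjoint_supp_of_disjoint_tsupp q hXZ hc hZ.1.root_mem)
      (disjoint_supp_of_disjoint_tsupp q hYZ hY.1.root_mem hZ.1.root_mem)).symm
  have hNY : N ∉ Y.supp.erase Y.root :=
    fun h => comp_root_notMem q hZ.1 hYZ.symm hs'MY (Finset.mem_of_mem_erase h)
  have hNZ : N ∉ Z.supp.erase Z.root := comp_root_notMem_erase_root q hZ hs'MY
  rw [box_eq_graft_of_mem q hX.pairwiseDisjoint hc hs,
    box_eq_graft_of_mem q hX.pairwiseDisjoint hc hs',
    box_eq_graft_of_mem q (pairwiseDisjoint_graft q hX hY hXY hc hs)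
      (Finset.mem_union_right _ (Finset.mem_insert_self _ _)) hs'MY,
    box_eq_graft_of_mem q (pairwiseDisjoint_graft q hX hZ hXZ hc hs')
      (Finset.mem_union_right _ (Finset.mem_insert_self _ _)) hsMZ, hN,
    graft_graft_merged hX.1 hY.1 hZ.1 (disjoint_of_disjoint_tsupp q hXY)
      (disjoint_of_disjoint_tsupp q hXZ) hc (comp_root_notMem q hY.1 hXY.symm hs)
      (comp_root_notMem_erase_root q hY hs) (comp_root_notMem q hY.1 hYZ hs) hNY hNY hNZ,
    graft_graft_merged hX.1 hZ.1 hY.1 (disjoint_of_disjoint_tsupp q hXZ)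
      (disjoint_of_disjoint_tsupp q hXY) hc (comp_root_notMem q hZ.1 hXZ.symm hs')
      (comp_root_notMem_erase_root q hZ hs') (comp_root_notMem q hZ.1 hYZ.symm hs') hNZ hNZ hNY,
    graft_root_comm hY.1 hZ.1 (disjoint_of_disjoint_tsupp q hYZ) hNY hNZ]

theorem box_box_assoc_of_ne_root {c b : Q} (hc : c ∈ X.supp) (hb : b ∈ Y.supp)
    (hbr : b ≠ Y.root) {s t : V} (hs : s ∈ q.supp c) (ht : t ∈ q.supp b) :
    box q (box q X s Y) t Z = box q X s (box q Y t Z) := by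
  have hroot : (Y.graft b Z (q.comp b t Z.root)).root = Y.root := if_neg hbr.symm
  simp only [box_eq_graft_of_mem q hX.pairwiseDisjoint hc hs,
    box_eq_graft_of_mem q hY.pairwiseDisjoint hb ht, hroot]
  rw [box_eq_graft_of_mem q (pairwiseDisjoint_graft q hX hY hXY hc hs)
    (Finset.mem_union_right _ (Finset.mem_insert_of_mem (Finset.mem_erase.2 ⟨hbr, hb⟩))) ht]
  exact graft_assoc hX.1 hY.1 hZ.1 (disjoint_of_disjoint_tsupp q hXY)
    (disjoint_of_disjoint_tsupp q hXZ) (disjoint_of_disjoint_tsupp q hYZ) hc hb hbr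
    (comp_root_notMem_erase_root q hY hs) (comp_root_notMem q hY.1 hYZ hs)
    (comp_root_notMem q hZ.1 hYZ.symm ht)

theorem box_box_assoc_of_root {c : Q} (hc : c ∈ X.supp) {s t : V} (hs : s ∈ q.supp c)
    (ht : t ∈ q.supp Y.root) :
    box q (box q X s Y) t Z = box q X s (box q Y t Z) := by
  have htMY : t ∈ q.supp (q.comp c s Y.root) := q.supp_subset_comp_right hs ht
  have hN : q.comp c s (q.comp Y.root t Z.root) = q.comp (q.comp c s Y.root) t Z.root :=
    (q.nested c Y.root Z.root s t hs ht
      (disjoint_supp_of_disjoint_tsupp q hXY hc hY.1.root_mem)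
      (disjoint_supp_of_disjoint_tsupp q hXZ hc hZ.1.root_mem)
      (disjoint_supp_of_disjoint_tsupp q hYZ hY.1.root_mem hZ.1.root_mem)).symm
  have hroot : (Y.graft Y.root Z (q.comp Y.root t Z.root)).root = q.comp Y.root t Z.root :=
    if_pos rfl
  simp only [box_eq_graft_of_mem q hX.pairwiseDisjoint hc hs,
    box_eq_graft_of_mem q hY.pairwiseDisjoint hY.1.root_mem ht, hroot, hN]
  rw [box_eq_graft_of_mem q (pairwiseDisjoint_graft q hX hY hXY hc hs)
    (Finset.mem_union_right _ (Finset.mem_insert_self _ _)) htMY]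
  exact graft_graft_merged hX.1 hY.1 hZ.1 (disjoint_of_disjoint_tsupp q hXY)
    (disjoint_of_disjoint_tsupp q hXZ) hc (comp_root_notMem q hY.1 hXY.symm hs)
    (comp_root_notMem_erase_root q hY hs) (comp_root_notMem q hY.1 hYZ hs)
    (fun h => comp_root_notMem q hZ.1 hYZ.symm htMY (Finset.mem_of_mem_erase h))
    (fun h => comp_root_notMem q hZ.1 hYZ.symm ht (Finset.mem_of_mem_erase h))
    (comp_root_notMem_erase_root q hZ ht)

theorem box_box_comm {s s' : V} (hs : s ∈ tsupp q X) (hs' : s' ∈ tsupp q X) (hss' : s ≠ s') :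
    box q (box q X s Y) s' Z = box q (box q X s' Z) s Y := by
  obtain ⟨hc, hsc⟩ := blockOf_spec q hs
  obtain ⟨hc', hsc'⟩ := blockOf_spec q hs'
  by_cases h : blockOf q X s = blockOf q X s'
  · exact box_box_comm_of_mem q hX hY hZ hXY hXZ hYZ hc hsc (h ▸ hsc') hss'
  · exact box_box_comm_of_ne q hX hY hZ hXY hXZ hYZ hc hc' h hsc hsc'

theorem box_box_assoc {s t : V} (hs : s ∈ tsupp q X) (ht : t ∈ tsupp q Y) :
    box q (box q X s Y) t Z = box q X s (box q Y t Z) := by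
  obtain ⟨hc, hsc⟩ := blockOf_spec q hs
  obtain ⟨hb, htb⟩ := blockOf_spec q ht
  by_cases h : blockOf q Y t = Y.root
  · exact box_box_assoc_of_root q hX hY hZ hXY hXZ hYZ hc hsc (h ▸ htb)
  · exact box_box_assoc_of_ne_root q hX hY hZ hXY hXZ hYZ hc hb h hsc htb

end Associativity

theorem pairwiseDisjoint_mapV_relabel {X : LTree Q}
    (hX : (X.supp : Set Q).PairwiseDisjoint q.supp) (e : V ≃ V) :
    ((mapV (q.relabel e) X).supp : Set Q).PairwiseDisjoint q.supp := by
  rw [mapV_supp, Finset.coe_image, (q.injOn_relabel hX e).pairwiseDisjoint_image]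
  intro a ha b hb hab
  simpa only [Function.onFun, Function.comp_apply, q.supp_relabel,
    Finset.disjoint_image e.injective] using hX ha hb hab

theorem mapV_relabel_box {X Y : LTree Q} (hX : Valid q X) (hY : Valid q Y)
    (hXY : Disjoint (tsupp q X) (tsupp q Y)) {s : V} (hs : s ∈ tsupp q X) (e : V ≃ V) :
    mapV (q.relabel e) (box q X s Y) =
      box q (mapV (q.relabel e) X) (e s) (mapV (q.relabel e) Y) := by
  obtain ⟨hc, hsc⟩ := blockOf_spec q hs
  set c := blockOf q X s
  have hb : blockOf q (mapV (q.relabel e) X) (e s) = q.relabel e c :=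
    blockOf_eq q (pairwiseDisjoint_mapV_relabel q hX.pairwiseDisjoint e)
      (Finset.mem_image_of_mem _ hc) (by rw [q.supp_relabel]; exact Finset.mem_image_of_mem _ hsc)
  rw [box_eq_graft, box_eq_graft, hb, mapV_root, ← q.natural e c s Y.root hsc]
  exact mapV_graft hX.1 hY.1 (disjoint_of_disjoint_tsupp q hXY) hc
    (comp_root_notMem q hY.1 hXY.symm hsc) (comp_root_notMem_erase_root q hY hsc)
    (q.injOn_relabel hX.pairwiseDisjoint e) (q.injOn_relabel hY.pairwiseDisjoint e)
    (q.injOn_relabel (pairwiseDisjoint_graft q hX hY hXY hc hsc) e)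

theorem mapV_relabel_unitT (a : V) (e : V ≃ V) :
    mapV (q.relabel e) (unitT q a) = unitT q (e a) := by
  rw [unitT_eq_eta, mapV_eta, q.natural_unit, unitT_eq_eta]

theorem unitT_box (a : V) {Y : LTree Q} (hY : Y.IsTree) : box q (unitT q a) a Y = Y := by
  have hb : blockOf q (unitT q a) a = q.unit a :=
    blockOf_eq q (by simp [unitT]) (Finset.mem_singleton_self _) (by simp [q.supp_unit])
  rw [box_eq_graft, hb, q.unit_left, unitT_eq_eta, eta_graft hY]

theorem box_unitT {X : LTree Q} (hX : Valid q X) {s : V} (hs : s ∈ tsupp q X) :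
    box q X s (unitT q s) = X := by
  obtain ⟨hc, hsc⟩ := blockOf_spec q hs
  rw [box_eq_graft_of_mem q hX.pairwiseDisjoint hc hsc, unitT_eq_eta]
  exact (congrArg _ (q.unit_right _ s hsc)).trans (graft_eta hX.1 hc _)

end NAPofQ

open NAPofQ in
/-- Let `q` be a positive symmetric operad.  The partial compositions `□ₛ` make the
composite species `NAP ∘ q` a symmetric operad: parallel associativity, nested
associativity, naturality and unitality hold. -/
theorem NAPofQ_is_operad {V Q : Type} [DecidableEq V] [DecidableEq Q]
    (q : POperad V Q) :
    -- (A1) parallel associativity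
    (∀ (X Y Z : LTree Q), Valid q X → Valid q Y → Valid q Z →
      Disjoint (tsupp q X) (tsupp q Y) → Disjoint (tsupp q X) (tsupp q Z) →
      Disjoint (tsupp q Y) (tsupp q Z) →
      ∀ s s' : V, s ∈ tsupp q X → s' ∈ tsupp q X → s ≠ s' →
        box q (box q X s Y) s' Z = box q (box q X s' Z) s Y) ∧
    -- (A2) nested associativity
    (∀ (X Y Z : LTree Q), Valid q X → Valid q Y → Valid q Z →
      Disjoint (tsupp q X) (tsupp q Y) → Disjoint (tsupp q X) (tsupp q Z) →
      Disjoint (tsupp q Y) (tsupp q Z) →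
      ∀ s t : V, s ∈ tsupp q X → t ∈ tsupp q Y →
        box q (box q X s Y) t Z = box q X s (box q Y t Z)) ∧
    -- (N1) naturality of the partial compositions
    (∀ (X Y : LTree Q), Valid q X → Valid q Y →
      Disjoint (tsupp q X) (tsupp q Y) →
      ∀ s : V, s ∈ tsupp q X → ∀ e : V ≃ V,
        LTree.mapV (q.relabel e) (box q X s Y) =
          box q (LTree.mapV (q.relabel e) X) (e s) (LTree.mapV (q.relabel e) Y)) ∧
    -- (N2) naturality of the units
    (∀ (a : V) (e : V ≃ V), LTree.mapV (q.relabel e) (unitT q a) = unitT q (e a)) ∧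
    -- (U1) left unitality
    (∀ (a : V) (Y : LTree Q), Valid q Y → a ∉ tsupp q Y →
      box q (unitT q a) a Y = Y) ∧
    -- (U2) right unitality
    (∀ (X : LTree Q) (s : V), Valid q X → s ∈ tsupp q X →
      box q X s (unitT q s) = X) := by
  exact ⟨fun X Y Z hX hY hZ hXY hXZ hYZ _ _ hs hs' hss' =>
      box_box_comm q hX hY hZ hXY hXZ hYZ hs hs' hss',
    fun X Y Z hX hY hZ hXY hXZ hYZ _ _ hs ht => box_box_assoc q hX hY hZ hXY hXZ hYZ hs ht,
    fun _ _ hX hY hXY _ hs e => mapV_relabel_box q hX hY hXY hs e,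
    mapV_relabel_unitT q,
    fun a _ hY _ => unitT_box q a hY.1,
    fun _ _ hX hs => box_unitT q hX hs⟩
end
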